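/- arXiv:1602.06629 — 2 statements merged into one kernel-verified Lean document; each statement's English description precedes it below -/
import Mathlib

section
/- Fix an integer b ≥ 2 and λ_c > 0, and let (X_N)_{N≥1} be a sequence of nonnegative reals such that |X_N − κ_b²/(λ_c N)| = O(1/N²). Then M^{⌊λ_c N⌋}(X_N) = (κ_b²/η_b) · 1/log(N/log N) + O(1/(log N)²); that is, there exist C > 0 and N_0 such that |M^{⌊λ_c N⌋}(X_N) − (κ_b²/η_b)/log(N/log N)| ≤ C/(log N)² for all N ≥ N_0. -/
/-!
With `α = (b - 1)/2` and `β = (b² - 1)/12` one has `M(x) = x + α x² + (α² - β) x³ + O(x⁴)`,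
hence `1/M(x) = 1/x - α + β x + O(x²)`. The function `ψ(x) = 1/x - (β/α) log x` is therefore an
approximate Fatou coordinate at the parabolic fixed point `0`: `ψ(M x) = ψ(x) - α + O(x²)`, and
since `M x - x ≥ α x²` the errors are bounded by the increments `M x - x`, so they telescope along
an orbit to `O(1)`. As `κ_b² = 1/α`, the starting point has `ψ(X_N) = α λ_c N + (β/α) log N + O(1)`,
so after `⌊λ_c N⌋` steps `y = 1/M^{⌊λ_c N⌋}(X_N)` satisfies `y + (β/α) log y = (β/α) log N + O(1)`.
Inverting, `y = (β/α)(log N - log log N) + O(1)`, and `κ_b²/η_b = α/β`.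
-/

open Filter Real

noncomputable section

def Mmap (b : ℕ) (x : ℝ) : ℝ := ((1 + x) ^ b - 1) / b

def kappa (b : ℕ) : ℝ := Real.sqrt (2 / ((b : ℝ) - 1))

def eta (b : ℕ) : ℝ := ((b : ℝ) + 1) / (3 * ((b : ℝ) - 1))

open Set

theorem one_add_pow_sub_cubic_mem_Icc (n : ℕ) {x : ℝ} (hx₀ : 0 ≤ x) (hx₁ : x ≤ 1) :
    (1 + x) ^ n - (1 + n * x + n.choose 2 * x ^ 2 + n.choose 3 * x ^ 3)
      ∈ Icc 0 (4 ^ n * x ^ 4) := by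
  induction n with
  | zero => simpa using pow_nonneg hx₀ 4
  | succ n ih =>
    have hpascal : (1 + x) ^ (n + 1) - (1 + ↑(n + 1) * x + ↑((n + 1).choose 2) * x ^ 2
        + ↑((n + 1).choose 3) * x ^ 3) = (1 + x) * ((1 + x) ^ n
          - (1 + n * x + n.choose 2 * x ^ 2 + n.choose 3 * x ^ 3)) + n.choose 3 * x ^ 4 := by
      simp only [Nat.choose_succ_succ, Nat.choose_one_right, Nat.cast_add]
      push_cast
      ring
    have hchoose : (n.choose 3 : ℝ) ≤ 4 ^ n := by
      exact_mod_cast (Nat.choose_le_two_pow n 3).trans (Nat.pow_le_pow_left (by norm_num) n)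
    obtain ⟨h₀, h₁⟩ := ih
    rw [hpascal]
    constructor
    · positivity
    · have : (1 + x) * ((1 + x) ^ n - (1 + n * x + n.choose 2 * x ^ 2 + n.choose 3 * x ^ 3))
          ≤ 2 * (4 ^ n * x ^ 4) := by
        gcongr
        linarith
      have : (n.choose 3 : ℝ) * x ^ 4 ≤ 4 ^ n * x ^ 4 := by gcongr
      have h4 : (4 : ℝ) ^ (n + 1) * x ^ 4 = 4 * (4 ^ n * x ^ 4) := by ring
      linarith

theorem Nat.cast_choose_three {K : Type*} [Field K] [CharZero K] (n : ℕ) :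
    (n.choose 3 : K) = n * (n - 1) * (n - 2) / 6 := by
  induction n with
  | zero => simp
  | succ n ih => rw [Nat.choose_succ_succ, Nat.cast_add, ih, Nat.cast_choose_two]; push_cast; ring

theorem abs_inv_sub_inv_le {y z D : ℝ} (hz : 0 < z) (hzy : z / 2 ≤ y) (h : |y - z| ≤ D) :
    |y⁻¹ - z⁻¹| ≤ 2 * D / z ^ 2 := by
  have hy : 0 < y := by linarith
  rw [inv_sub_inv hy.ne' hz.ne', abs_div, abs_sub_comm, abs_of_pos (mul_pos hy hz),
    div_le_div_iff₀ (mul_pos hy hz) (by positivity)]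
  have hD : 0 ≤ D := (abs_nonneg _).trans h
  calc |y - z| * z ^ 2 ≤ D * (z * z) := by rw [sq]; gcongr
    _ ≤ D * (2 * y * z) := by gcongr; linarith
    _ = 2 * D * (y * z) := by ring

theorem abs_inv_sub_le_of_abs_sub_inv_le {x u C : ℝ} (hu : 0 < u) (hCu : 2 * C ≤ u)
    (h : |x - u⁻¹| ≤ C / u ^ 2) : 0 < x ∧ |x⁻¹ - u| ≤ 2 * C := by
  have hx : u⁻¹ / 2 ≤ x := by
    have : C / u ^ 2 ≤ u⁻¹ / 2 := by
      rw [div_le_iff₀ (by positivity)]; field_simp; nlinarith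
    linarith [(abs_le.1 h).1]
  refine ⟨lt_of_lt_of_le (by positivity) hx, ?_⟩
  have := abs_inv_sub_inv_le (inv_pos.2 hu) hx h
  rwa [inv_inv, show 2 * (C / u ^ 2) / u⁻¹ ^ 2 = 2 * C by field_simp] at this

namespace Real

theorem abs_log_sub_log_le_log {y u r : ℝ} (hu : 0 < u) (hr : 0 < r) (h₁ : u / r ≤ y)
    (h₂ : y ≤ r * u) : |log y - log u| ≤ log r := by
  have hy : 0 < y := lt_of_lt_of_le (by positivity) h₁
  rw [abs_le, ← log_div hy.ne' hu.ne', ← log_inv]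
  constructor
  · exact log_le_log (by positivity) (by rwa [le_div_iff₀ hu, inv_mul_eq_div])
  · exact log_le_log (by positivity) (by rw [div_le_iff₀ hu]; linarith)

theorem log_le_half_self {t : ℝ} (ht : 0 < t) : log t ≤ t / 2 := by
  have h := log_le_sub_one_of_pos (half_pos ht)
  rw [log_div ht.ne' two_ne_zero] at h
  linarith [log_two_lt_d9]

end Real

theorem exists_abs_inv_sub_le_of_abs_add_log_sub_le {p : ℝ} (hp : 0 < p) (C : ℝ) :
    ∃ K, 0 < K ∧ ∀ᶠ t in atTop, ∀ y, 1 ≤ y → |y + p * log y - p * t| ≤ C →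
      |y⁻¹ - p⁻¹ / (t - log t)| ≤ K / t ^ 2 := by
  set D := |C| + p * (log 4 + |log p|)
  have hD : 0 < D := by have := log_pos (by norm_num : (1 : ℝ) < 4); positivity
  refine ⟨8 * D / p ^ 2, by positivity, ?_⟩
  filter_upwards [eventually_ge_atTop 1, eventually_ge_atTop (C / p),
    eventually_ge_atTop (4 * (C + p * log (2 * p)) / p)] with t ht₁ ht₂ ht₃ y hy h
  have ht : 0 < t := by linarith
  have hlogt : 0 ≤ log t := log_nonneg ht₁
  have hlogy : 0 ≤ log y := log_nonneg hy
  set z := p * (t - log t)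
  have hz₁ : p * t / 2 ≤ z := by nlinarith [log_le_half_self ht]
  obtain ⟨h₁, h₂⟩ := abs_le.1 h
  have hCt : C ≤ p * t := by rwa [div_le_iff₀ hp, mul_comm] at ht₂
  have hy₁ : y ≤ 2 * (p * t) := by nlinarith
  have hlogy₁ : log y ≤ log (2 * p) + log t := by
    rw [← log_mul (by positivity) ht.ne']
    exact log_le_log (by linarith) (by linarith)
  have hy₂ : z / 2 ≤ y := by
    rw [div_le_iff₀ hp] at ht₃
    nlinarith
  have hlog : |log y - log (p * t)| ≤ log 4 :=
    abs_log_sub_log_le_log (by positivity) (by norm_num) (by linarith) (by linarith)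
  have hyz : |y - z| ≤ D := by
    have hid : y - z = (y + p * log y - p * t) - p * (log y - log (p * t)) - p * log p := by
      rw [log_mul hp.ne' ht.ne']; ring
    have e₁ : |p * (log y - log (p * t))| ≤ p * log 4 := by
      rw [abs_mul, abs_of_pos hp]; exact mul_le_mul_of_nonneg_left hlog hp.le
    have e₂ : |p * log p| = p * |log p| := by rw [abs_mul, abs_of_pos hp]
    calc |y - z| ≤ |y + p * log y - p * t| + |p * (log y - log (p * t))| + |p * log p| := by
          rw [hid]; exact (abs_sub _ _).trans (add_le_add_left (abs_sub _ _) _)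
      _ ≤ |C| + p * log 4 + p * |log p| := by
          rw [e₂]; exact add_le_add_left (add_le_add (h.trans (le_abs_self C)) e₁) _
      _ = D := by ring
  rw [show p⁻¹ / (t - log t) = z⁻¹ by simp only [z, mul_inv, div_eq_mul_inv]]
  calc |y⁻¹ - z⁻¹| ≤ 2 * D / z ^ 2 := abs_inv_sub_inv_le (by nlinarith) hy₂ hyz
    _ ≤ 2 * D / (p * t / 2) ^ 2 := by gcongr
    _ = 8 * D / p ^ 2 / t ^ 2 := by field_simp; ring

theorem iterate_mem_Ioc_and_abs_sub_le {f ψ : ℝ → ℝ} {a c δ x₀ : ℝ} {k : ℕ}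
    (hψ : StrictAntiOn ψ (Ioi 0)) (hf : MonotoneOn f (Ioi 0)) (hf_pos : ∀ x ∈ Ioc 0 δ, 0 < f x)
    (ha : 0 ≤ a) (hc : 0 ≤ c) (hδ : 0 < δ)
    (hstep : ∀ x ∈ Ioc 0 δ, |ψ (f x) - (ψ x - a)| ≤ c * (f x - x))
    (hx₀ : 0 < x₀) (hk : ψ δ + a * k + c * f δ ≤ ψ x₀) :
    ∀ n ≤ k, f^[n] x₀ ∈ Ioc 0 δ ∧ |ψ (f^[n] x₀) - (ψ x₀ - a * n)| ≤ c * (f^[n] x₀ - x₀) := by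
  have hfδ := hf_pos δ ⟨hδ, le_rfl⟩
  have le_δ : ∀ x, 0 < x → ψ δ ≤ ψ x → x ≤ δ := fun x hx h => by
    by_contra! hδx
    exact (hψ hδ hx hδx).not_ge h
  intro n
  induction n with
  | zero =>
    intro _
    refine ⟨⟨hx₀, le_δ x₀ hx₀ ?_⟩, by simp⟩
    nlinarith
  | succ n ih =>
    intro hn
    obtain ⟨⟨hxn₀, hxnδ⟩, hxn⟩ := ih (by omega)
    set x := f^[n] x₀
    have hfx : 0 < f x := hf_pos x ⟨hxn₀, hxnδ⟩
    have hfxδ : f x ≤ f δ := hf hxn₀ hδ hxnδ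
    have hbound : |ψ (f x) - (ψ x₀ - a * ↑(n + 1))| ≤ c * (f x - x₀) := by
      calc |ψ (f x) - (ψ x₀ - a * ↑(n + 1))|
          = |(ψ (f x) - (ψ x - a)) + (ψ x - (ψ x₀ - a * n))| := by push_cast; ring_nf
        _ ≤ c * (f x - x) + c * (x - x₀) :=
          (abs_add_le _ _).trans (add_le_add (hstep x ⟨hxn₀, hxnδ⟩) hxn)
        _ = c * (f x - x₀) := by ring
    have hk' : a * ↑(n + 1) ≤ a * k := mul_le_mul_of_nonneg_left (by exact_mod_cast hn) ha
    have hcfx : c * (f x - x₀) ≤ c * f δ := mul_le_mul_of_nonneg_left (by linarith) hc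
    rw [Function.iterate_succ_apply']
    refine ⟨⟨hfx, le_δ _ hfx ?_⟩, hbound⟩
    linarith [(abs_le.1 hbound).1]

namespace Mmap

variable {b : ℕ}

def alpha (b : ℕ) : ℝ := ((b : ℝ) - 1) / 2

def beta (b : ℕ) : ℝ := ((b : ℝ) ^ 2 - 1) / 12

theorem alpha_pos (hb : 2 ≤ b) : 0 < alpha b := by
  have : (2 : ℝ) ≤ b := by exact_mod_cast hb
  unfold alpha; linarith

theorem alpha_nonneg (hb : 0 < b) : 0 ≤ alpha b := by
  have : (1 : ℝ) ≤ b := by exact_mod_cast hb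
  unfold alpha; linarith

theorem beta_pos (hb : 2 ≤ b) : 0 < beta b := by
  have : (2 : ℝ) ≤ b := by exact_mod_cast hb
  unfold beta; nlinarith

theorem cast_choose_two_div (hb : 0 < b) : (b.choose 2 : ℝ) / b = alpha b := by
  rw [Nat.cast_choose_two, alpha]
  field_simp [hb.ne']

theorem cast_choose_three_div (hb : 0 < b) : (b.choose 3 : ℝ) / b = alpha b ^ 2 - beta b := by
  rw [Nat.cast_choose_three, alpha, beta]
  field_simp [hb.ne']
  ring

theorem sub_cubic_mem_Icc (hb : 0 < b) {x : ℝ} (hx₀ : 0 ≤ x) (hx₁ : x ≤ 1) :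
    Mmap b x - (x + alpha b * x ^ 2 + (alpha b ^ 2 - beta b) * x ^ 3)
      ∈ Icc 0 (4 ^ b / b * x ^ 4) := by
  have hb' : (0 : ℝ) < b := by positivity
  have hexp : Mmap b x - (x + alpha b * x ^ 2 + (alpha b ^ 2 - beta b) * x ^ 3)
      = ((1 + x) ^ b - (1 + b * x + b.choose 2 * x ^ 2 + b.choose 3 * x ^ 3)) / b := by
    rw [← cast_choose_three_div hb, ← cast_choose_two_div hb, Mmap]
    field_simp
    ring
  obtain ⟨h₀, h₁⟩ := one_add_pow_sub_cubic_mem_Icc b hx₀ hx₁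
  rw [hexp, div_mul_eq_mul_div]
  exact ⟨by positivity, by gcongr⟩

theorem alpha_sq_sub_beta_nonneg (hb : 0 < b) : 0 ≤ alpha b ^ 2 - beta b := by
  rw [← cast_choose_three_div hb]
  positivity

theorem pos_of_pos (hb : 0 < b) {x : ℝ} (hx : 0 < x) : 0 < Mmap b x := by
  have : 1 < (1 + x) ^ b := one_lt_pow₀ (by linarith) hb.ne'
  unfold Mmap
  exact div_pos (by linarith) (by exact_mod_cast hb)

theorem monotoneOn : MonotoneOn (Mmap b) (Ioi 0) := fun x hx y _ hxy => by
  unfold Mmap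
  gcongr
  linarith [mem_Ioi.1 hx]

theorem alpha_mul_sq_le_sub (hb : 0 < b) {x : ℝ} (hx₀ : 0 ≤ x) (hx₁ : x ≤ 1) :
    alpha b * x ^ 2 ≤ Mmap b x - x := by
  have := (sub_cubic_mem_Icc hb hx₀ hx₁).1
  nlinarith [mul_nonneg (alpha_sq_sub_beta_nonneg hb) (pow_nonneg hx₀ 3)]

theorem exists_abs_inv_sub_le (hb : 0 < b) : ∃ B, 0 ≤ B ∧ ∀ x ∈ Ioc (0 : ℝ) 1,
    |(Mmap b x)⁻¹ - (x⁻¹ - alpha b + beta b * x)| ≤ B * x ^ 2 := by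
  set α := alpha b
  set β := beta b
  set Q : ℝ := 4 ^ b / b
  set B := |α * β - α * (α ^ 2 - β)| + |β| * |α ^ 2 - β| + (1 + |α| + |β|) * Q
  refine ⟨B, by positivity, ?_⟩
  rintro x ⟨hx₀, hx₁⟩
  obtain ⟨hθ₀, hθ₁⟩ := sub_cubic_mem_Icc hb hx₀.le hx₁
  have hxM : x ≤ Mmap b x := by nlinarith [alpha_mul_sq_le_sub hb hx₀.le hx₁, alpha_nonneg hb]
  set θ := Mmap b x - (x + α * x ^ 2 + (α ^ 2 - β) * x ^ 3) with hθ
  have hx4 : x ^ 5 ≤ x ^ 4 := pow_le_pow_of_le_one hx₀.le hx₁ (by norm_num)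
  have hpoly : |1 - α * x + β * x ^ 2| ≤ 1 + |α| + |β| := by
    calc |1 - α * x + β * x ^ 2| ≤ |1| + |-(α * x)| + |β * x ^ 2| := abs_add_three _ _ _
      _ ≤ 1 + |α| + |β| := by
        simp only [abs_one, abs_neg, abs_mul, abs_of_pos hx₀, abs_pow]
        have : x ^ 2 ≤ 1 := pow_le_one₀ hx₀.le hx₁
        gcongr
        · exact mul_le_of_le_one_right (abs_nonneg α) hx₁
        · exact mul_le_of_le_one_right (abs_nonneg β) this
  have hnum : |x - (1 - α * x + β * x ^ 2) * Mmap b x| ≤ B * x ^ 4 := by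
    -- the `x²` and `x³` terms cancel: this is what fixes `β`
    have hid : x - (1 - α * x + β * x ^ 2) * Mmap b x = -((α * β - α * (α ^ 2 - β)) * x ^ 4)
        + -(β * (α ^ 2 - β) * x ^ 5) + -((1 - α * x + β * x ^ 2) * θ) := by
      rw [hθ]; ring
    rw [hid]
    refine (abs_add_three _ _ _).trans ?_
    simp only [abs_neg, abs_mul, abs_pow, abs_of_pos hx₀, abs_of_nonneg hθ₀]
    have h₁ := mul_le_mul hpoly hθ₁ hθ₀ (by positivity)
    have h₂ := mul_le_mul_of_nonneg_left hx4 (by positivity : 0 ≤ |β| * |α ^ 2 - β|)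
    linear_combination h₁ + h₂
  have hM : 0 < Mmap b x := hx₀.trans_le hxM
  have hid : (Mmap b x)⁻¹ - (x⁻¹ - α + β * x)
      = (x - (1 - α * x + β * x ^ 2) * Mmap b x) / (x * Mmap b x) := by
    field_simp
  rw [hid, abs_div, abs_of_pos (mul_pos hx₀ hM), div_le_iff₀ (mul_pos hx₀ hM)]
  calc _ ≤ B * x ^ 4 := hnum
    _ = B * x ^ 2 * (x * x) := by ring
    _ ≤ B * x ^ 2 * (x * Mmap b x) := by gcongr

theorem exists_abs_log_sub_le (hb : 0 < b) : ∃ K, 0 ≤ K ∧ ∀ x ∈ Ioc (0 : ℝ) 1,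
    |log (Mmap b x) - log x - alpha b * x| ≤ K * x ^ 2 := by
  set α := alpha b
  set γ := α ^ 2 - beta b
  set Q : ℝ := 4 ^ b / b
  have hα : 0 ≤ α := alpha_nonneg hb
  have hγ : 0 ≤ γ := alpha_sq_sub_beta_nonneg hb
  refine ⟨γ + Q + (α + γ + Q) ^ 2, by positivity, ?_⟩
  rintro x ⟨hx₀, hx₁⟩
  obtain ⟨hθ₀, hθ₁⟩ := sub_cubic_mem_Icc hb hx₀.le hx₁
  set v := Mmap b x - x with hv
  have hv₀ : α * x ^ 2 ≤ v := alpha_mul_sq_le_sub hb hx₀.le hx₁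
  have hv₁ : v ≤ α * x ^ 2 + (γ + Q) * x ^ 3 := by
    nlinarith [pow_le_pow_of_le_one hx₀.le hx₁ (show 3 ≤ 4 by norm_num), pow_nonneg hx₀.le 3]
  have hM : Mmap b x = x + v := by rw [hv]; ring
  have hlog : log (Mmap b x) - log x = log (1 + v / x) := by
    rw [← log_div (pos_of_pos hb hx₀).ne' hx₀.ne', hM]
    field_simp
  have hw₀ : 0 ≤ v / x := div_nonneg (le_trans (by positivity) hv₀) hx₀.le
  have hw₁ : α * x ≤ v / x := by rw [le_div_iff₀ hx₀]; linarith
  have hw₂ : v / x ≤ α * x + (γ + Q) * x ^ 2 := by rw [div_le_iff₀ hx₀]; linarith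
  have hw₃ : v / x ≤ (α + γ + Q) * x := by nlinarith
  have hup : log (1 + v / x) ≤ v / x := by
    linarith [log_le_sub_one_of_pos (by linarith : 0 < 1 + v / x)]
  have hlow : v / x - (v / x) ^ 2 ≤ log (1 + v / x) := by
    refine le_trans ?_ (one_sub_inv_le_log_of_pos (by linarith : 0 < 1 + v / x))
    rw [le_sub_iff_add_le, ← le_sub_iff_add_le', inv_eq_one_div, div_le_iff₀ (by linarith)]
    nlinarith
  rw [hlog, abs_le]
  constructor <;> nlinarith [pow_le_pow_left₀ hw₀ hw₃ 2]

def fatouCoord (b : ℕ) (x : ℝ) : ℝ := x⁻¹ - beta b / alpha b * log x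

theorem fatouCoord_eq_inv_add (x : ℝ) :
    fatouCoord b x = x⁻¹ + beta b / alpha b * log x⁻¹ := by
  rw [fatouCoord, log_inv]; ring

theorem fatouCoord_strictAntiOn (hb : 0 < b) : StrictAntiOn (fatouCoord b) (Ioi 0) := by
  intro x hx y hy hxy
  have hp : 0 ≤ beta b / alpha b := by
    have : (1 : ℝ) ≤ b := by exact_mod_cast hb
    exact div_nonneg (by unfold beta; nlinarith) (alpha_nonneg hb)
  have hinv : y⁻¹ < x⁻¹ := (inv_lt_inv₀ hy hx).2 hxy
  have hlog : log x ≤ log y := log_le_log hx hxy.le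
  unfold fatouCoord
  nlinarith

theorem exists_abs_fatouCoord_map_sub_le (hb : 2 ≤ b) : ∃ c, 0 ≤ c ∧ ∀ x ∈ Ioc (0 : ℝ) 1,
    |fatouCoord b (Mmap b x) - (fatouCoord b x - alpha b)| ≤ c * (Mmap b x - x) := by
  have hα := alpha_pos hb
  have hβ := beta_pos hb
  obtain ⟨B, hB, hinv⟩ := exists_abs_inv_sub_le (b := b) (by omega)
  obtain ⟨K, hK, hlog⟩ := exists_abs_log_sub_le (b := b) (by omega)
  refine ⟨(B + beta b / alpha b * K) / alpha b, by positivity, ?_⟩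
  intro x hx
  have hid : fatouCoord b (Mmap b x) - (fatouCoord b x - alpha b)
      = ((Mmap b x)⁻¹ - (x⁻¹ - alpha b + beta b * x))
        - beta b / alpha b * (log (Mmap b x) - log x - alpha b * x) := by
    unfold fatouCoord
    field_simp
    ring
  have hsq := alpha_mul_sq_le_sub (b := b) (by omega) hx.1.le hx.2
  calc |fatouCoord b (Mmap b x) - (fatouCoord b x - alpha b)|
      ≤ B * x ^ 2 + beta b / alpha b * (K * x ^ 2) := by
        rw [hid]
        refine (abs_sub _ _).trans (add_le_add (hinv x hx) ?_)
        rw [abs_mul, abs_of_pos (by positivity)]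
        exact mul_le_mul_of_nonneg_left (hlog x hx) (by positivity)
    _ = (B + beta b / alpha b * K) / alpha b * (alpha b * x ^ 2) := by
        field_simp
    _ ≤ (B + beta b / alpha b * K) / alpha b * (Mmap b x - x) := by gcongr

theorem kappa_sq (hb : 0 < b) : kappa b ^ 2 = (alpha b)⁻¹ := by
  have : (1 : ℝ) ≤ b := by exact_mod_cast hb
  rw [kappa, sq_sqrt (div_nonneg zero_le_two (by linarith)), alpha, inv_div]

theorem kappa_sq_div_eta (hb : 2 ≤ b) : kappa b ^ 2 / eta b = alpha b / beta b := by
  have : (2 : ℝ) ≤ b := by exact_mod_cast hb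
  have h₁ : (b : ℝ) - 1 ≠ 0 := by linarith
  have h₂ : (b : ℝ) ^ 2 - 1 ≠ 0 := by nlinarith
  rw [kappa_sq (by omega), eta, alpha, beta]
  field_simp
  ring

theorem exists_abs_fatouCoord_sub_le_of_abs_sub_le (hb : 2 ≤ b) {lamc C : ℝ} (hlamc : 0 < lamc)
    {X : ℕ → ℝ} {N₀ : ℕ} (hX : ∀ N ≥ N₀, |X N - kappa b ^ 2 / (lamc * N)| ≤ C / (N : ℝ) ^ 2) :
    ∃ C₁, ∀ᶠ N : ℕ in atTop, 0 < X N ∧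
      |fatouCoord b (X N) - alpha b * ⌊lamc * N⌋₊ - beta b / alpha b * log N| ≤ C₁ := by
  set α := alpha b
  set p := beta b / alpha b
  have hα : 0 < α := alpha_pos hb
  have hp : 0 < p := div_pos (beta_pos hb) hα
  set C' := |C| * (α * lamc) ^ 2 with hC'
  refine ⟨2 * C' + α + p * (log 4 + |log (α * lamc)|), ?_⟩
  have hu : Tendsto (fun N : ℕ => α * lamc * N) atTop atTop :=
    tendsto_natCast_atTop_atTop.const_mul_atTop (by positivity)
  filter_upwards [eventually_ge_atTop N₀, eventually_gt_atTop 0, hu.eventually_ge_atTop (4 * C')]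
    with N hN hN₀ hNC
  set u := α * lamc * N with hu_def
  have hN₀' : (0 : ℝ) < N := by exact_mod_cast hN₀
  have hu₀ : 0 < u := by positivity
  have hXu : |X N - u⁻¹| ≤ C' / u ^ 2 := by
    have e₁ : kappa b ^ 2 / (lamc * N) = u⁻¹ := by
      rw [show kappa b ^ 2 = α⁻¹ from kappa_sq (by omega), hu_def]; field_simp
    have e₂ : C' / u ^ 2 = |C| / (N : ℝ) ^ 2 := by rw [hC', hu_def]; field_simp
    rw [e₂]
    exact (e₁ ▸ hX N hN).trans (by gcongr; exact le_abs_self C)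
  obtain ⟨hX₀, hyu⟩ := abs_inv_sub_le_of_abs_sub_inv_le hu₀
    (by linarith [show 0 ≤ C' by positivity]) hXu
  have hlog : |log (X N)⁻¹ - log u| ≤ log 4 := by
    obtain ⟨h₁, h₂⟩ := abs_le.1 hyu
    exact abs_log_sub_log_le_log hu₀ (by norm_num) (by linarith) (by linarith)
  have hlogu : log u = log (α * lamc) + log N := log_mul (by positivity) hN₀'.ne'
  have hfloor₁ : α * ⌊lamc * N⌋₊ ≤ u := by
    rw [hu_def, mul_assoc]; exact mul_le_mul_of_nonneg_left (Nat.floor_le (by positivity)) hα.le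
  have hfloor₂ : u - α ≤ α * ⌊lamc * N⌋₊ := by
    have := mul_le_mul_of_nonneg_left (Nat.lt_floor_add_one (lamc * N)).le hα.le
    linarith
  have hsplit : fatouCoord b (X N) - α * ⌊lamc * N⌋₊ - p * log N = ((X N)⁻¹ - u)
      + (u - α * ⌊lamc * N⌋₊) + p * ((log (X N)⁻¹ - log u) + log (α * lamc)) := by
    rw [fatouCoord_eq_inv_add, hlogu]; ring
  have hplog : |p * ((log (X N)⁻¹ - log u) + log (α * lamc))| ≤ p * (log 4 + |log (α * lamc)|) := by
    rw [abs_mul, abs_of_pos hp]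
    exact mul_le_mul_of_nonneg_left ((abs_add_le _ _).trans (add_le_add hlog le_rfl)) hp.le
  refine ⟨hX₀, ?_⟩
  rw [hsplit, abs_le]
  constructor <;> linarith [abs_le.1 hyu, abs_le.1 hplog]

end Mmap

open Mmap

theorem Mmap_iterate_lambda_c_general
    (b : ℕ) (hb : 2 ≤ b) (lamc : ℝ) (hlamc : 0 < lamc)
    (X : ℕ → ℝ)
    (hX : ∃ C : ℝ, 0 < C ∧ ∃ N₀ : ℕ, ∀ N ≥ N₀,
      |X N - kappa b ^ 2 / (lamc * N)| ≤ C / (N : ℝ) ^ 2) :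
    ∃ C : ℝ, 0 < C ∧ ∃ N₀ : ℕ, ∀ N ≥ N₀,
      |(Mmap b)^[⌊lamc * N⌋₊] (X N)
        - (kappa b ^ 2 / eta b) / Real.log ((N : ℝ) / Real.log N)|
        ≤ C / (Real.log N) ^ 2 := by
  obtain ⟨C, -, N₀, hX⟩ := hX
  have hp : 0 < beta b / alpha b := div_pos (beta_pos hb) (alpha_pos hb)
  obtain ⟨c, hc, hstep⟩ := exists_abs_fatouCoord_map_sub_le hb
  obtain ⟨C₁, hstart⟩ := exists_abs_fatouCoord_sub_le_of_abs_sub_le hb hlamc hX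
  obtain ⟨K, hK, hinv⟩ := exists_abs_inv_sub_le_of_abs_add_log_sub_le hp (C₁ + c)
  have hlog : Tendsto (fun N : ℕ => log N) atTop atTop :=
    tendsto_log_atTop.comp tendsto_natCast_atTop_atTop
  obtain ⟨N₁, hN₁⟩ := eventually_atTop.1 (hstart.and ((hlog.eventually hinv).and
    (((hlog.const_mul_atTop hp).eventually_ge_atTop (fatouCoord b 1 + c * Mmap b 1 + C₁)).and
      (eventually_gt_atTop 1))))
  refine ⟨K, hK, N₁, fun N hN => ?_⟩
  obtain ⟨⟨hX₀, hstartN⟩, hinvN, hlarge, hN⟩ := hN₁ N hN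
  obtain ⟨⟨hx₀, hx₁⟩, hiter⟩ := iterate_mem_Ioc_and_abs_sub_le (fatouCoord_strictAntiOn (by omega))
    monotoneOn (fun x hx => pos_of_pos (by omega) hx.1) (alpha_pos hb).le hc one_pos hstep hX₀
    (by linarith [(abs_le.1 hstartN).1]) _ le_rfl
  set x := (Mmap b)^[⌊lamc * N⌋₊] (X N)
  have hcx : c * (x - X N) ≤ c := mul_le_of_le_one_right hc (by linarith)
  have hψ : |fatouCoord b x - beta b / alpha b * log N| ≤ C₁ + c :=
    ((abs_sub_le _ _ _).trans (add_le_add (hiter.trans hcx) hstartN)).trans_eq (add_comm _ _)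
  rw [fatouCoord_eq_inv_add] at hψ
  rw [log_div (by positivity) (log_pos (by exact_mod_cast hN)).ne', kappa_sq_div_eta hb, ← inv_div]
  simpa using hinvN x⁻¹ ((one_le_inv₀ hx₀).2 hx₁) hψ

/-- **Lemma (iterates of `M`), part (i).** If `X_N = κ_b²/(λ_c N) + O(1/N²)` then
`M^{⌊λ_c N⌋}(X_N) = (κ_b²/η_b)/log(N/log N) + O(1/(log N)²)`. -/
theorem Mmap_iterate_lambda_c
    (b : ℕ) (hb : 2 ≤ b) (lamc : ℝ) (hlamc : 0 < lamc)
    (X : ℕ → ℝ) (hXpos : ∀ N, 0 ≤ X N)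
    (hX : ∃ C : ℝ, 0 < C ∧ ∃ N₀ : ℕ, ∀ N ≥ N₀,
      |X N - kappa b ^ 2 / (lamc * N)| ≤ C / (N : ℝ) ^ 2) :
    ∃ C : ℝ, 0 < C ∧ ∃ N₀ : ℕ, ∀ N ≥ N₀,
      |(Mmap b)^[⌊lamc * N⌋₊] (X N)
        - (kappa b ^ 2 / eta b) / Real.log ((N : ℝ) / Real.log N)|
        ≤ C / (Real.log N) ^ 2 :=
  Mmap_iterate_lambda_c_general b hb lamc hlamc X hX

end
end

section
/- Fix an integer b ≥ 2, β > 0, and integers 0 ≤ j < k ≤ n. Then the random variables R_{j,n}(β) and R_{k,n}(β) − R_{j,n}(β) are uncorrelated, i.e. E[R_{j,n}(β) · (R_{k,n}(β) − R_{j,n}(β))] = 0. -/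
open MeasureTheory ProbabilityTheory Filter Real

noncomputable section

/-- Edge set of the `n`-th diamond graph with branching parameter `b = s`,
identified with `(Fin b × Fin b)^n`. -/
abbrev DiamondEdges (b n : ℕ) : Type := Fin n → Fin b × Fin b

/-- The i.i.d. environment: the product of the disorder law `μ` over the edges of `D_n`. -/
def envMeasure (b n : ℕ) (μ : Measure ℝ) : Measure ((DiamondEdges b n) → ℝ) :=
  Measure.pi fun _ => μ

/-- The normalizing constant `E[e^{βω}]`. -/
def emgf (μ : Measure ℝ) (β : ℝ) : ℝ := ∫ x, Real.exp (β * x) ∂μ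

/-- The normalized partition function `W_n(β)`: `W_0(β) = e^{βω}/E[e^{βω}]` and
`W_{n+1}(β) = (1/b) Σ_{i=1}^b Π_{j=1}^b W_n^{(i,j)}(β)`, where the copies of `D_n`
inside `D_{n+1}` are indexed by `(i,j) ∈ Fin b × Fin b` (branch `i`, segment `j`).
This is exactly `|Γ_n|⁻¹ Σ_{p ∈ Γ_n} Π_{a ◁ p} e^{β ω_a}/E[e^{β ω_a}]`. -/
def W (b : ℕ) (μ : Measure ℝ) : (n : ℕ) → ℝ → ((DiamondEdges b n) → ℝ) → ℝ
  | 0, β, ω => Real.exp (β * ω (fun i => i.elim0)) / emgf μ β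
  | n + 1, β, ω => (1 / (b : ℝ)) * ∑ i : Fin b, ∏ j : Fin b,
      W b μ n β (fun a => ω (Fin.cons (i, j) a))

/-- For `g ∈ E_{n-k}` (identified with an embedded copy of `D_k` inside `D_n`), the
environment restricted to the subgraph associated with `g`: the edge `a` of the copy of
`D_k` corresponds to the edge of `D_n` whose first `n - k` coordinates are given by `g`
and whose remaining coordinates are given by `a`. -/
def subEnv (b : ℕ) {n k : ℕ} (g : DiamondEdges b (n - k)) (ω : (DiamondEdges b n) → ℝ) :
    (DiamondEdges b k) → ℝ :=
  fun a => ω (fun i => if hi : (i : ℕ) < n - k then g ⟨(i : ℕ), hi⟩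
    else a ⟨(i : ℕ) - (n - k), by have := i.isLt; omega⟩)

/-- `R_{k,n}(β) = b^{-(n-k)} Σ_{g ∈ E_{n-k}} R_n(β; g)`, where
`R_n(β; g) = W_n(β; g) - 1` and `W_n(β; g)` is the normalized partition function
of the copy of `D_k` inside `D_n` labelled by `g ∈ E_{n-k}`. -/
def Ravg (b : ℕ) (μ : Measure ℝ) (k n : ℕ) (β : ℝ) (ω : (DiamondEdges b n) → ℝ) : ℝ :=
  (1 / (b : ℝ) ^ (n - k)) * ∑ g : DiamondEdges b (n - k), (W b μ k β (subEnv b g ω) - 1)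

/-!
Splitting off the first coordinate of the edge labels identifies the environment of `D_{m+1}`
with `b²` independent environments of `D_m` (one per copy `(i, j)`), and then
`W_{m+1} = b⁻¹ ∑ᵢ ∏ⱼ W_m^{(i,j)}` and `R_{j,m+1} = b⁻¹ ∑_c R_{j,m}^{(c)}`. Written as sums of
products of functions of distinct copies, all first and second moments factorise, and induction
on `m` gives `E W_m = 1`, `E R_{j,m} = 0` and, for `j ≤ k ≤ m`,
`E[R_{j,m} W_m] = E[R_{j,m} R_{k,m}] = E[(W_j - 1)²]`, a quantity independent of `k`.
The theorem is the difference of the cases `k` and `j` of the last identity.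
-/

section ProductMeasure

variable {X ι : Type*} [MeasurableSpace X] {ρ : Measure X} [IsProbabilityMeasure ρ] [Fintype ι]

lemma memLp_two_pi_prod {F : ι → X → ℝ} (hF : ∀ i, MemLp (F i) 2 ρ) :
    MemLp (fun η : ι → X => ∏ i, F i (η i)) 2 (Measure.pi fun _ => ρ) := by
  have hmeas : AEStronglyMeasurable (fun η : ι → X => ∏ i, F i (η i)) (Measure.pi fun _ => ρ) :=
    Finset.aestronglyMeasurable_fun_prod _ fun i _ =>
      (hF i).1.comp_measurePreserving (measurePreserving_eval _ i)
  refine (memLp_two_iff_integrable_sq hmeas).2 ?_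
  simp_rw [← Finset.prod_pow]
  exact Integrable.fintype_prod_dep (μ := fun _ => ρ) fun i => (hF i).integrable_sq

lemma integral_sum_pi_prod {κ : Type*} [Fintype κ] (F : κ → ι → X → ℝ)
    (hF : ∀ t i, Integrable (F t i) ρ) :
    ∫ η, ∑ t, ∏ i, F t i (η i) ∂(Measure.pi fun _ => ρ) = ∑ t, ∏ i, ∫ x, F t i x ∂ρ := by
  rw [integral_finsetSum _ fun t _ => Integrable.fintype_prod_dep (μ := fun _ => ρ) (hF t)]
  exact Finset.sum_congr rfl fun t _ => integral_fintype_prod_eq_prod (μ := fun _ => ρ) (F t)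

lemma integral_sum_pi_prod_mul_sum_pi_prod {κ κ' : Type*} [Fintype κ] [Fintype κ']
    (F : κ → ι → X → ℝ) (G : κ' → ι → X → ℝ)
    (hF : ∀ t i, MemLp (F t i) 2 ρ) (hG : ∀ s i, MemLp (G s i) 2 ρ) :
    ∫ η, (∑ t, ∏ i, F t i (η i)) * (∑ s, ∏ i, G s i (η i)) ∂(Measure.pi fun _ => ρ)
      = ∑ t, ∑ s, ∏ i, ∫ x, F t i x * G s i x ∂ρ := by
  have h := integral_sum_pi_prod (ρ := ρ) (fun (ts : κ × κ') i x => F ts.1 i x * G ts.2 i x)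
    fun ts i => (hF ts.1 i).integrable_mul (hG ts.2 i)
  simp only [Finset.prod_mul_distrib, Fintype.sum_prod_type] at h
  simpa only [Fintype.sum_mul_sum] using h

lemma memLp_ite_one {p : ENNReal} {f : X → ℝ} (hf : MemLp f p ρ) (P : Prop) [Decidable P] :
    MemLp (if P then f else 1) p ρ := by
  split_ifs
  exacts [hf, memLp_const 1]

end ProductMeasure

lemma prod_ite_eq_apply {ι X : Type*} [Fintype ι] [DecidableEq ι] (c : ι) (f : X → ℝ)
    (η : ι → X) : ∏ i, (if i = c then f else 1) (η i) = f (η c) := by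
  simp [ite_apply]

instance (b n : ℕ) (μ : Measure ℝ) [IsProbabilityMeasure μ] :
    IsProbabilityMeasure (envMeasure b n μ) := by
  unfold envMeasure; infer_instance

/-- `η (i, j)` is the environment of the copy of `D_m` in segment `j` of branch `i`. -/
def envCons (b m : ℕ) :
    (Fin b × Fin b → DiamondEdges b m → ℝ) ≃ᵐ (DiamondEdges b (m + 1) → ℝ) :=
  (MeasurableEquiv.curry _ _ ℝ).symm.trans
    (MeasurableEquiv.piCongrLeft (fun _ => ℝ) (Fin.consEquiv fun _ => Fin b × Fin b))

@[simp]
lemma envCons_apply_cons {b m : ℕ} (η : Fin b × Fin b → DiamondEdges b m → ℝ)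
    (c : Fin b × Fin b) (a : DiamondEdges b m) : envCons b m η (Fin.cons c a) = η c a := by
  change Equiv.piCongrLeft (fun _ => ℝ) (Fin.consEquiv _) (Function.uncurry η)
    (Fin.consEquiv (fun _ => Fin b × Fin b) (c, a)) = _
  rw [Equiv.piCongrLeft_apply_apply]
  rfl

lemma measurePreserving_envCons {b m : ℕ} {μ : Measure ℝ} [IsProbabilityMeasure μ] :
    MeasurePreserving (envCons b m)
      (Measure.pi fun _ => envMeasure b m μ) (envMeasure b (m + 1) μ) := by
  have hcurry : MeasurePreserving (MeasurableEquiv.curry _ _ ℝ).symm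
      (Measure.pi fun _ : Fin b × Fin b => envMeasure b m μ) (Measure.pi fun _ => μ) := by
    refine ⟨by fun_prop, ?_⟩
    simpa only [Measure.infinitePi_eq_pi, envMeasure] using
      Measure.infinitePi_map_curry_symm (ι := Fin b × Fin b) (κ := DiamondEdges b m) fun _ _ => μ
  exact (measurePreserving_piCongrLeft (fun _ => μ) _).comp hcurry

lemma memLp_of_memLp_comp_envCons {b m : ℕ} {μ : Measure ℝ} [IsProbabilityMeasure μ]
    {p : ENNReal} {f : (DiamondEdges b (m + 1) → ℝ) → ℝ}
    (hf : MemLp (f ∘ envCons b m) p (Measure.pi fun _ => envMeasure b m μ)) :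
    MemLp f p (envMeasure b (m + 1) μ) := by
  simpa [Function.comp_def] using hf.comp_measurePreserving measurePreserving_envCons.symm

lemma integral_envMeasure_succ {b m : ℕ} {μ : Measure ℝ} [IsProbabilityMeasure μ]
    (f : (DiamondEdges b (m + 1) → ℝ) → ℝ) :
    ∫ ω, f ω ∂(envMeasure b (m + 1) μ)
      = ∫ η, f (envCons b m η) ∂(Measure.pi fun _ => envMeasure b m μ) :=
  (measurePreserving_envCons.integral_comp' f).symm

section Recursion

variable {b : ℕ} {μ : Measure ℝ} {β : ℝ}

lemma W_zero : W b μ 0 β = fun ω => rexp (β * ω default) / emgf μ β := by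
  funext ω
  simp only [W]
  congr 3

lemma W_succ_envCons {m : ℕ} (η : Fin b × Fin b → DiamondEdges b m → ℝ) :
    W b μ (m + 1) β (envCons b m η)
      = (b : ℝ)⁻¹ * ∑ i : Fin b, ∏ p : Fin b × Fin b, (if p.1 = i then W b μ m β else 1) (η p) := by
  simp only [W, envCons_apply_cons, one_div, Fintype.prod_prod_type, ite_apply, Pi.one_apply]
  congr 2
  funext i
  rw [Finset.prod_comm]
  simp

lemma subEnv_envCons {j m : ℕ} (hd : m + 1 - j = m - j + 1)
    (η : Fin b × Fin b → DiamondEdges b m → ℝ) (c : Fin b × Fin b) (g : DiamondEdges b (m - j)) :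
    subEnv b (fun i => Fin.cons (α := fun _ => Fin b × Fin b) c g (Fin.cast hd i)) (envCons b m η)
      = subEnv b g (η c) := by
  funext a
  rw [subEnv, subEnv, ← envCons_apply_cons η c]
  refine congrArg (envCons b m η) (funext fun i => Fin.cases ?_ (fun i => ?_) i)
  · rw [Fin.cons_zero, dif_pos (by simp; omega)]
    exact Fin.cons_zero (α := fun _ => Fin b × Fin b) c g
  · simp only [Fin.cons_succ, Fin.val_succ]
    split_ifs with h h'
    · exact Fin.cons_succ (α := fun _ => Fin b × Fin b) c g ⟨i, h'⟩
    · omega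
    · omega
    · exact congrArg a (Fin.ext (by simp; omega))

lemma Ravg_self (j : ℕ) :
    Ravg b μ j j β = fun ω => W b μ j β ω - 1 := by
  funext ω
  have hsub : ∀ g : DiamondEdges b (j - j), subEnv b g ω = ω := fun g =>
    funext fun a => congrArg ω <| funext fun i => by
      rw [dif_neg (by omega)]
      exact congrArg a (Fin.ext (by simp))
  simp [Ravg, hsub]

lemma Ravg_succ_envCons {j m : ℕ} (hjm : j ≤ m) (η : Fin b × Fin b → DiamondEdges b m → ℝ) :
    Ravg b μ j (m + 1) β (envCons b m η) = (b : ℝ)⁻¹ * ∑ c, Ravg b μ j m β (η c) := by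
  have hd : m + 1 - j = m - j + 1 := by omega
  let e : (Fin b × Fin b) × DiamondEdges b (m - j) ≃ DiamondEdges b (m + 1 - j) :=
    (Fin.consEquiv _).trans ((finCongr hd.symm).arrowCongr (Equiv.refl _))
  have he : ∀ c g, subEnv b (e (c, g)) (envCons b m η) = subEnv b g (η c) :=
    fun c g => subEnv_envCons hd η c g
  simp only [Ravg, ← e.sum_comp, Fintype.sum_prod_type, he, Finset.mul_sum, hd, pow_succ]
  refine Finset.sum_congr rfl fun c _ => Finset.sum_congr rfl fun g _ => ?_
  field_simp

lemma inv_mul_inv_mul_sum_const (hb : b ≠ 0) (V : ℝ) :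
    ((b : ℝ)⁻¹ * (b : ℝ)⁻¹) * ∑ _c : Fin b × Fin b, V = V := by
  simp
  field_simp

end Recursion

section Moments

variable {b : ℕ} {μ : Measure ℝ} [IsProbabilityMeasure μ] {β : ℝ}
variable (hexp : MemLp (fun x => rexp (β * x)) 2 μ)
include hexp

lemma memLp_W (m : ℕ) : MemLp (W b μ m β) 2 (envMeasure b m μ) := by
  induction m with
  | zero =>
    simpa [W_zero, div_eq_mul_inv, Function.comp_def] using
      (hexp.mul_const (emgf μ β)⁻¹).comp_measurePreserving (measurePreserving_eval _ default)
  | succ m ih =>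
    refine memLp_of_memLp_comp_envCons ?_
    rw [show W b μ (m + 1) β ∘ envCons b m = _ from funext W_succ_envCons]
    refine (memLp_finsetSum _ fun i _ => memLp_two_pi_prod fun p => ?_).const_mul _
    exact memLp_ite_one ih _

lemma integral_W (hb : b ≠ 0) (m : ℕ) : ∫ ω, W b μ m β ω ∂(envMeasure b m μ) = 1 := by
  induction m with
  | zero =>
    have hZ : 0 < emgf μ β := integral_exp_pos (hexp.integrable one_le_two)
    simp only [W_zero, envMeasure]
    rw [integral_comp_eval (μ := fun _ => μ) (i := default)
      (f := fun x : ℝ => rexp (β * x) / emgf μ β) (by fun_prop), integral_div]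
    exact div_self hZ.ne'
  | succ m ih =>
    have hval : ∀ i p, ∫ ω, (if (p : Fin b × Fin b).1 = i then W b μ m β else 1) ω
        ∂(envMeasure b m μ) = 1 := by
      intro i p
      split_ifs
      exacts [ih, by simp]
    rw [integral_envMeasure_succ]
    simp only [W_succ_envCons]
    rw [integral_const_mul, integral_sum_pi_prod _ fun i p =>
      (memLp_ite_one (memLp_W hexp m) _).integrable one_le_two]
    simp [hval, hb]

lemma memLp_Ravg {j m : ℕ} (hjm : j ≤ m) : MemLp (Ravg b μ j m β) 2 (envMeasure b m μ) := by
  induction m, hjm using Nat.le_induction with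
  | base =>
    rw [Ravg_self]
    exact (memLp_W hexp j).sub (memLp_const 1)
  | succ m hjm ih =>
    refine memLp_of_memLp_comp_envCons ?_
    rw [show Ravg b μ j (m + 1) β ∘ envCons b m = _ from funext (Ravg_succ_envCons hjm)]
    exact (memLp_finsetSum _ fun c _ =>
      ih.comp_measurePreserving (measurePreserving_eval _ c)).const_mul _

lemma integral_Ravg (hb : b ≠ 0) {j m : ℕ} (hjm : j ≤ m) :
    ∫ ω, Ravg b μ j m β ω ∂(envMeasure b m μ) = 0 := by
  induction m, hjm using Nat.le_induction with
  | base =>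
    rw [Ravg_self, integral_sub ((memLp_W hexp j).integrable one_le_two) (integrable_const 1),
      integral_W hexp hb]
    simp
  | succ m hjm ih =>
    rw [integral_envMeasure_succ]
    simp only [Ravg_succ_envCons hjm]
    rw [integral_const_mul,
      integral_finsetSum (f := fun c (η : Fin b × Fin b → _) => Ravg b μ j m β (η c)) _
        fun c _ => ((memLp_Ravg hexp hjm).comp_measurePreserving
          (measurePreserving_eval _ c)).integrable one_le_two,
      Finset.sum_eq_zero fun c _ =>
      (integral_comp_eval (μ := fun _ => envMeasure b m μ) (memLp_Ravg hexp hjm).1).trans ih,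
      mul_zero]

lemma integral_Ravg_mul_W (hb : b ≠ 0) {j m : ℕ} (hjm : j ≤ m) :
    ∫ ω, Ravg b μ j m β ω * W b μ m β ω ∂(envMeasure b m μ)
      = ∫ ω, (W b μ j β ω - 1) ^ 2 ∂(envMeasure b j μ) := by
  induction m, hjm using Nat.le_induction with
  | base =>
    have hR := memLp_Ravg (b := b) hexp (le_refl j)
    have hmean := integral_Ravg hexp hb (le_refl j)
    rw [Ravg_self] at hR hmean ⊢
    calc ∫ ω, (W b μ j β ω - 1) * W b μ j β ω ∂(envMeasure b j μ)
        = ∫ ω, ((W b μ j β ω - 1) ^ 2 + (W b μ j β ω - 1)) ∂(envMeasure b j μ) := by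
          congr 1; funext ω; ring
      _ = _ := by rw [integral_add hR.integrable_sq (hR.integrable one_le_two), hmean, add_zero]
  | succ m hjm ih =>
    set V := ∫ ω, (W b μ j β ω - 1) ^ 2 ∂(envMeasure b j μ)
    have hform : ∀ η, Ravg b μ j (m + 1) β (envCons b m η) * W b μ (m + 1) β (envCons b m η)
        = ((b : ℝ)⁻¹ * (b : ℝ)⁻¹) *
          ((∑ c, ∏ p, (if p = c then Ravg b μ j m β else 1) (η p)) *
            ∑ i : Fin b, ∏ p : Fin b × Fin b, (if p.1 = i then W b μ m β else 1) (η p)) := by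
      intro η
      rw [Ravg_succ_envCons hjm, W_succ_envCons]
      simp only [prod_ite_eq_apply]
      ring
    have hprod : ∀ (c : Fin b × Fin b) (i : Fin b), ∏ p, ∫ x,
        (if p = c then Ravg b μ j m β else 1) x * (if p.1 = i then W b μ m β else 1) x
          ∂(envMeasure b m μ) = if c.1 = i then V else 0 := by
      intro c i
      split_ifs with hi
      · rw [Fintype.prod_eq_single c fun p hp => by
          by_cases hpi : p.1 = i <;> simp [hp, hpi, integral_W hexp hb]]
        simpa [hi] using ih
      · exact Finset.prod_eq_zero (Finset.mem_univ c) (by simp [hi, integral_Ravg hexp hb hjm])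
    rw [integral_envMeasure_succ]
    simp only [hform]
    rw [integral_const_mul, integral_sum_pi_prod_mul_sum_pi_prod _ _
      (fun c p => memLp_ite_one (memLp_Ravg hexp hjm) _)
      (fun i p => memLp_ite_one (memLp_W hexp m) _)]
    simp only [hprod, Finset.sum_ite_eq, Finset.mem_univ, if_true]
    exact inv_mul_inv_mul_sum_const hb V

lemma integral_Ravg_mul_Ravg (hb : b ≠ 0) {j k m : ℕ} (hjk : j ≤ k) (hkm : k ≤ m) :
    ∫ ω, Ravg b μ j m β ω * Ravg b μ k m β ω ∂(envMeasure b m μ)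
      = ∫ ω, (W b μ j β ω - 1) ^ 2 ∂(envMeasure b j μ) := by
  induction m, hkm using Nat.le_induction with
  | base =>
    have hRj := memLp_Ravg (b := b) hexp hjk
    have hW := memLp_W (b := b) hexp k
    simp only [Ravg_self, mul_sub, mul_one]
    rw [integral_sub (f := fun ω => Ravg b μ j k β ω * W b μ k β ω) (hRj.integrable_mul hW)
      (hRj.integrable one_le_two),
      integral_Ravg_mul_W hexp hb hjk, integral_Ravg hexp hb hjk, sub_zero]
  | succ m hkm ih =>
    set V := ∫ ω, (W b μ j β ω - 1) ^ 2 ∂(envMeasure b j μ)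
    have hjm := hjk.trans hkm
    have hform : ∀ η, Ravg b μ j (m + 1) β (envCons b m η) * Ravg b μ k (m + 1) β (envCons b m η)
        = ((b : ℝ)⁻¹ * (b : ℝ)⁻¹) *
          ((∑ c, ∏ p, (if p = c then Ravg b μ j m β else 1) (η p)) *
            ∑ c, ∏ p, (if p = c then Ravg b μ k m β else 1) (η p)) := by
      intro η
      rw [Ravg_succ_envCons hjm, Ravg_succ_envCons hkm]
      simp only [prod_ite_eq_apply]
      ring
    have hprod : ∀ c c' : Fin b × Fin b, ∏ p, ∫ x,
        (if p = c then Ravg b μ j m β else 1) x * (if p = c' then Ravg b μ k m β else 1) x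
          ∂(envMeasure b m μ) = if c = c' then V else 0 := by
      intro c c'
      split_ifs with hc
      · subst hc
        rw [Fintype.prod_eq_single c fun p hp => by simp [hp]]
        simpa using ih
      · exact Finset.prod_eq_zero (Finset.mem_univ c)
          (by simp [hc, integral_Ravg hexp hb hjm])
    rw [integral_envMeasure_succ]
    simp only [hform]
    rw [integral_const_mul, integral_sum_pi_prod_mul_sum_pi_prod _ _
      (fun c p => memLp_ite_one (memLp_Ravg hexp hjm) _)
      (fun c p => memLp_ite_one (memLp_Ravg hexp hkm) _)]
    simp only [hprod, Finset.sum_ite_eq, Finset.mem_univ, if_true]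
    exact inv_mul_inv_mul_sum_const hb V

end Moments

theorem Ravg_increments_uncorrelated_general
    (b : ℕ) (hb : 2 ≤ b) (μ : Measure ℝ) [IsProbabilityMeasure μ]
    (hexp : ∀ β : ℝ, Integrable (fun x => Real.exp (β * x)) μ)
    (β : ℝ) (j k n : ℕ) (hjk : j < k) (hkn : k ≤ n) :
    ∫ ω, Ravg b μ j n β ω * (Ravg b μ k n β ω - Ravg b μ j n β ω)
      ∂(envMeasure b n μ) = 0 := by
  have hb0 : b ≠ 0 := by omega
  have hjn : j ≤ n := hjk.le.trans hkn
  have hL2 : MemLp (fun x => rexp (β * x)) 2 μ := by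
    refine (memLp_two_iff_integrable_sq (by fun_prop)).2 ?_
    simpa only [sq, ← Real.exp_add, ← add_mul, ← two_mul, mul_assoc] using hexp (2 * β)
  have hRj := memLp_Ravg (b := b) hL2 hjn
  have hRk := memLp_Ravg (b := b) hL2 hkn
  simp only [mul_sub]
  refine (integral_sub (hRj.integrable_mul hRk) (hRj.integrable_mul hRj)).trans ?_
  simp only [Pi.mul_apply]
  rw [integral_Ravg_mul_Ravg hL2 hb0 hjk.le hkn, integral_Ravg_mul_Ravg hL2 hb0 le_rfl hjn,
    sub_self]

/-- **Lemma (orthogonality of increments).** For `0 ≤ j < k ≤ n`, the random variables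
`R_{j,n}(β)` and `R_{k,n}(β) - R_{j,n}(β)` are uncorrelated. -/
theorem Ravg_increments_uncorrelated
    (b : ℕ) (hb : 2 ≤ b) (μ : Measure ℝ) [IsProbabilityMeasure μ]
    (hmean : ∫ x, x ∂μ = 0) (hvar : ∫ x, x ^ 2 ∂μ = 1)
    (hexp : ∀ β : ℝ, Integrable (fun x => Real.exp (β * x)) μ)
    (β : ℝ) (hβ : 0 < β) (j k n : ℕ) (hjk : j < k) (hkn : k ≤ n) :
    ∫ ω, Ravg b μ j n β ω * (Ravg b μ k n β ω - Ravg b μ j n β ω)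
      ∂(envMeasure b n μ) = 0 :=
  Ravg_increments_uncorrelated_general b hb μ hexp β j k n hjk hkn
end
end
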